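/- Minimax value of the ensemble aggregation game (Theorem 2.2, value part): the minimax value V = min over g ∈ [−1,1]ⁿ of sup over z ∈ Z of ℓ(z,g) satisfies V = (1/2)·inf over σ ∈ ℝᵖ with σ ≥ 0 of γ(σ) = (1/2)·inf over σ ≥ 0 of [−bᵀσ + (1/n)·Σ_{j=1}^n Ψ(x_jᵀσ)]. -/

import Mathlib

/-!
For a fixed prediction `g`, the adversary's problem `max_{z ∈ Z} ℓ(z, g)` maximises an affine
function of `z` over the cube `[-1,1]ⁿ` subject to the `p` linear constraints defining `Z`.
Lagrangian duality on the compact cube (a separating hyperplane in `ℝᵖ × ℝ`) turns twice its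
value into `inf_{σ ≥ 0} [-bᵀσ + (1/n) Σⱼ max(mⱼ + 2ℓ₊(gⱼ), 2ℓ₋(gⱼ) - mⱼ)]` with `m = Fᵀσ`.
Minimising the `j`-th summand over `gⱼ ∈ [-1,1]` gives exactly `Ψ(mⱼ)`: monotonicity of `ℓ₊`, `ℓ₋`
shows that `Γ⁻¹(mⱼ)`, clamped to `±1`, is optimal. Exchanging the infima over `g` and over `σ`
yields `V = γ* / 2`.
-/

open scoped BigOperators

noncomputable def Psi (lp lm Γinv : ℝ → ℝ) (m : ℝ) : ℝ :=
  if m ≤ lm (-1) - lp (-1) then -m + 2 * lm (-1)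
  else if m < lm 1 - lp 1 then lp (Γinv m) + lm (Γinv m)
  else m + 2 * lp 1

noncomputable def lossV (lp lm : ℝ → ℝ) (n : ℕ) (z g : Fin n → ℝ) : ℝ :=
  (1 / (n : ℝ)) * ∑ j, ((1 + z j) / 2 * lp (g j) + (1 - z j) / 2 * lm (g j))

def ZSet (p n : ℕ) (F : Fin p → Fin n → ℝ) (b : Fin p → ℝ) : Set (Fin n → ℝ) :=
  {z | (∀ j, z j ∈ Set.Icc (-1:ℝ) 1) ∧ ∀ i, b i ≤ (1 / (n : ℝ)) * ∑ j, F i j * z j}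

noncomputable def slack (lp lm Γinv : ℝ → ℝ) (p n : ℕ) (F : Fin p → Fin n → ℝ)
    (b : Fin p → ℝ) (σ : Fin p → ℝ) : ℝ :=
  -(∑ i, b i * σ i) + (1 / (n : ℝ)) * ∑ j, Psi lp lm Γinv (∑ i, σ i * F i j)

open Set
open scoped Pointwise

lemma nonneg_of_forall_sub_mul_lt {a d β : ℝ} (h : ∀ t : ℝ, 0 ≤ t → a - t * d < β) : 0 ≤ d := by
  by_contra! hd
  have h₀ := h 0 le_rfl
  have h₁ := h ((β - a) / -d) (div_nonneg (by linarith) (by linarith))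
  have : (β - a) / -d * d = a - β := by field_simp [hd.ne]; ring
  linarith

lemma ContinuousLinearMap.apply_prod_eq_sum {ι : Type*} [Fintype ι] [DecidableEq ι]
    (ℓ : (ι → ℝ) × ℝ →L[ℝ] ℝ) (u : ι → ℝ) (t : ℝ) :
    ℓ (u, t) = ∑ i, u i * ℓ (Pi.single i 1, 0) + t * ℓ (0, 1) := by
  have hu : (u, t) =
      ∑ i, u i • ((Pi.single i 1 : ι → ℝ), (0 : ℝ)) + t • ((0 : ι → ℝ), (1 : ℝ)) := by
    ext <;> simp [Prod.fst_sum, Prod.snd_sum, Finset.sum_apply, Pi.single_apply]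
  rw [hu, map_add, map_sum, map_smul]
  simp only [map_smul, smul_eq_mul]

theorem exists_lagrangeMultipliers {E ι : Type*} [AddCommMonoid E] [SMul ℝ E]
    [TopologicalSpace E] [Fintype ι] {K : Set E} {f : E → ℝ} {g : ι → E → ℝ} {P ε : ℝ}
    (hK : IsCompact K) (hf : ConcaveOn ℝ K f) (hg : ∀ i, ConcaveOn ℝ K (g i))
    (hfc : ContinuousOn f K) (hgc : ∀ i, ContinuousOn (g i) K)
    (hfeas : ∃ z ∈ K, ∀ i, 0 ≤ g i z) (hP : ∀ z ∈ K, (∀ i, 0 ≤ g i z) → f z ≤ P)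
    (hε : 0 < ε) :
    ∃ σ : ι → ℝ, (∀ i, 0 ≤ σ i) ∧ ∀ z ∈ K, f z + ∑ i, σ i * g i z ≤ P + ε := by
  classical
  obtain ⟨z₀, hz₀K, hz₀⟩ := hfeas
  set φ : E → (ι → ℝ) × ℝ := fun z => (fun i => g i z, f z)
  set S : Set ((ι → ℝ) × ℝ) := {q | ∃ z ∈ K, q ≤ φ z}
  have hS_lower : ∀ q ∈ S, ∀ q', q' ≤ q → q' ∈ S := fun q ⟨z, hz, hq⟩ q' hq' =>
    ⟨z, hz, hq'.trans hq⟩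
  have hS_convex : Convex ℝ S := by
    rintro q₁ ⟨z₁, hz₁, hq₁⟩ q₂ ⟨z₂, hz₂, hq₂⟩ a b ha hb hab
    refine ⟨a • z₁ + b • z₂, hf.1 hz₁ hz₂ ha hb hab, ?_⟩
    refine (add_le_add (smul_le_smul_of_nonneg_left hq₁ ha)
      (smul_le_smul_of_nonneg_left hq₂ hb)).trans ⟨fun i => ?_, ?_⟩
    · exact (hg i).2 hz₁ hz₂ ha hb hab
    · exact hf.2 hz₁ hz₂ ha hb hab
  have hS_closed : IsClosed S := by
    have hS : S = φ '' K + Set.Iic 0 := by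
      ext q
      refine ⟨fun ⟨z, hz, hq⟩ =>
        ⟨φ z, ⟨z, hz, rfl⟩, q - φ z, sub_nonpos.2 hq, add_sub_cancel _ _⟩, ?_⟩
      rintro ⟨_, ⟨z, hz, rfl⟩, d, hd, rfl⟩
      exact ⟨z, hz, add_le_of_nonpos_right hd⟩
    rw [hS]
    exact isClosed_Iic.add_left_of_isCompact
      (hK.image_of_continuousOn ((continuousOn_pi.2 hgc).prodMk hfc))
  have hout : ((0 : ι → ℝ), P + ε) ∉ S := by
    rintro ⟨z, hz, hg0, hfz⟩
    have := hP z hz hg0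
    simp only [φ] at hfz
    linarith
  -- `S` is a lower set, so the separating functional has nonnegative coefficients; the last one
  -- is positive because `S` meets the axis `{0} × ℝ` below `P + ε`. Normalised, they are the
  -- multipliers.
  obtain ⟨ℓ, β, hℓS, hβ⟩ := geometric_hahn_banach_closed_point hS_convex hS_closed hout
  set α : ι → ℝ := fun i => ℓ (Pi.single i 1, 0)
  set μ := ℓ (0, 1)
  have hℓ : ∀ u t, ℓ (u, t) = ∑ i, u i * α i + t * μ := ℓ.apply_prod_eq_sum
  have hα : ∀ i, 0 ≤ α i := fun i =>
    nonneg_of_forall_sub_mul_lt (a := ℓ (φ z₀)) fun t ht => by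
      have hd : (0 : (ι → ℝ) × ℝ) ≤ t • (Pi.single i 1, 0) :=
        smul_nonneg ht ⟨Pi.single_nonneg.2 zero_le_one, le_rfl⟩
      have := hℓS _ (hS_lower _ ⟨z₀, hz₀K, le_rfl⟩ _ (sub_le_self _ hd))
      rwa [map_sub, map_smul, smul_eq_mul] at this
  have hμ : 0 < μ := by
    have h₀ := (hℓS ((0 : ι → ℝ), f z₀) ⟨z₀, hz₀K, hz₀, le_rfl⟩).trans hβ
    have := hP z₀ hz₀K hz₀
    simp only [hℓ, Pi.zero_apply, zero_mul, Finset.sum_const_zero, zero_add] at h₀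
    nlinarith
  refine ⟨fun i => α i / μ, fun i => div_nonneg (hα i) hμ.le, fun z hz => ?_⟩
  have := (hℓS _ ⟨z, hz, le_rfl⟩).trans hβ
  simp only [φ, hℓ, Pi.zero_apply, zero_mul, Finset.sum_const_zero, zero_add] at this
  have hdiv : f z + ∑ i, α i / μ * g i z = (∑ i, g i z * α i + f z * μ) / μ := by
    rw [add_div, Finset.sum_div, mul_div_cancel_right₀ _ hμ.ne', add_comm]
    congr 1
    exact Finset.sum_congr rfl fun i _ => by ring
  rw [hdiv, div_le_iff₀ hμ]
  linarith

theorem IsGLB.image_swap {α β γ : Type*} [Preorder γ] {S : Set α} {T : Set β}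
    {D : α → β → γ} {a : α → γ} {c : β → γ} {x : γ} (hx : IsGLB (a '' S) x)
    (ha : ∀ s ∈ S, IsGLB (D s '' T) (a s)) (hc : ∀ t ∈ T, IsGLB ((D · t) '' S) (c t)) :
    IsGLB (c '' T) x := by
  constructor
  · rintro _ ⟨t, ht, rfl⟩
    refine (hc t ht).2 ?_
    rintro _ ⟨s, hs, rfl⟩
    exact (hx.1 ⟨s, hs, rfl⟩).trans ((ha s hs).1 ⟨t, ht, rfl⟩)
  · intro y hy
    refine hx.2 ?_
    rintro _ ⟨s, hs, rfl⟩
    refine (ha s hs).2 ?_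
    rintro _ ⟨t, ht, rfl⟩
    exact (hy ⟨t, ht, rfl⟩).trans ((hc t ht).1 ⟨s, hs, rfl⟩)

def cube (n : ℕ) : Set (Fin n → ℝ) := univ.pi fun _ => Icc (-1) 1

/-- Twice the worst-case Lagrangian loss of the prediction `g` at price `m`: the maximum of
`(1 + t) ℓ₊(g) + (1 - t) ℓ₋(g) + t m` over labels `t ∈ [-1, 1]`. -/
noncomputable def maxLoss (lp lm : ℝ → ℝ) (g m : ℝ) : ℝ := max (m + 2 * lp g) (2 * lm g - m)

lemma le_maxLoss (lp lm : ℝ → ℝ) {g m t : ℝ} (ht : t ∈ Icc (-1) 1) :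
    (1 + t) * lp g + (1 - t) * lm g + t * m ≤ maxLoss lp lm g m := by
  have h₁ := mul_le_mul_of_nonneg_left (le_max_left (m + 2 * lp g) (2 * lm g - m))
    (show 0 ≤ (1 + t) / 2 by linarith [ht.1])
  have h₂ := mul_le_mul_of_nonneg_left (le_max_right (m + 2 * lp g) (2 * lm g - m))
    (show 0 ≤ (1 - t) / 2 by linarith [ht.2])
  rw [maxLoss]
  linarith

lemma exists_eq_maxLoss (lp lm : ℝ → ℝ) (g m : ℝ) :
    ∃ t ∈ Icc (-1 : ℝ) 1, (1 + t) * lp g + (1 - t) * lm g + t * m = maxLoss lp lm g m := by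
  rcases le_total (m + 2 * lp g) (2 * lm g - m) with h | h
  · exact ⟨-1, by norm_num, by rw [maxLoss, max_eq_right h]; ring⟩
  · exact ⟨1, by norm_num, by rw [maxLoss, max_eq_left h]; ring⟩

lemma isLeast_Psi {lp lm Γinv : ℝ → ℝ} (hlpm : AntitoneOn lp (Icc (-1) 1))
    (hlmm : MonotoneOn lm (Icc (-1) 1))
    (hGinvMem : ∀ m ∈ Icc (lm (-1) - lp (-1)) (lm 1 - lp 1), Γinv m ∈ Icc (-1 : ℝ) 1)
    (hGinvRight : ∀ m ∈ Icc (lm (-1) - lp (-1)) (lm 1 - lp 1), lm (Γinv m) - lp (Γinv m) = m)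
    (m : ℝ) :
    IsLeast ((maxLoss lp lm · m) '' Icc (-1) 1) (Psi lp lm Γinv m) := by
  have hm1 : (-1 : ℝ) ∈ Icc (-1) 1 := by norm_num
  have hp1 : (1 : ℝ) ∈ Icc (-1) 1 := by norm_num
  refine ⟨?_, ?_⟩
  · unfold Psi
    split_ifs with h₁ h₂
    · exact ⟨-1, hm1, by dsimp only; rw [maxLoss, max_eq_right (by linarith)]; ring⟩
    · have hmI : m ∈ Icc (lm (-1) - lp (-1)) (lm 1 - lp 1) := ⟨(not_le.1 h₁).le, h₂.le⟩
      have := hGinvRight m hmI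
      refine ⟨Γinv m, hGinvMem m hmI, ?_⟩
      dsimp only
      rw [maxLoss, max_eq_left (by linarith)]
      linarith
    · exact ⟨1, hp1, by dsimp only; rw [maxLoss, max_eq_left (by linarith)]⟩
  · rintro _ ⟨g, hg, rfl⟩
    unfold Psi maxLoss
    split_ifs with h₁ h₂
    · exact le_max_of_le_right (by linarith [hlmm hm1 hg hg.1])
    · have hmI : m ∈ Icc (lm (-1) - lp (-1)) (lm 1 - lp 1) := ⟨(not_le.1 h₁).le, h₂.le⟩
      have := hGinvRight m hmI
      rcases le_total g (Γinv m) with hle | hle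
      · exact le_max_of_le_left (by linarith [hlpm hg (hGinvMem m hmI) hle])
      · exact le_max_of_le_right (by linarith [hlmm (hGinvMem m hmI) hg hle])
    · exact le_max_of_le_left (by linarith [hlpm hg hp1 hg.2])

lemma min_le_lossV {lp lm : ℝ → ℝ} {n : ℕ} (hlpm : AntitoneOn lp (Icc (-1) 1))
    (hlmm : MonotoneOn lm (Icc (-1) 1)) (hn : 0 < n) {z g : Fin n → ℝ} (hz : z ∈ cube n)
    (hg : g ∈ cube n) :
    min (lp 1) (lm (-1)) ≤ lossV lp lm n z g := by
  set c := min (lp 1) (lm (-1))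
  have hterm : ∀ j, c ≤ (1 + z j) / 2 * lp (g j) + (1 - z j) / 2 * lm (g j) := by
    intro j
    obtain ⟨hz₁, hz₂⟩ := hz j (mem_univ j)
    have hgj := hg j (mem_univ j)
    have h₁ : c ≤ lp (g j) := (min_le_left _ _).trans (hlpm hgj ⟨by norm_num, le_rfl⟩ hgj.2)
    have h₂ : c ≤ lm (g j) := (min_le_right _ _).trans (hlmm ⟨le_rfl, by norm_num⟩ hgj hgj.1)
    nlinarith
  have := Finset.card_nsmul_le_sum Finset.univ _ c fun j _ => hterm j
  rw [Finset.card_univ, Fintype.card_fin, nsmul_eq_mul] at this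
  rw [lossV, div_mul_eq_mul_div, one_mul, le_div_iff₀ (by positivity)]
  linarith

section Game

variable (lp lm : ℝ → ℝ) {p n : ℕ} (F : Fin p → Fin n → ℝ) (b : Fin p → ℝ)

noncomputable def constraintGap (i : Fin p) (z : Fin n → ℝ) : ℝ :=
  (1 / (n : ℝ)) * ∑ j, F i j * z j - b i

noncomputable def lagrangian (g : Fin n → ℝ) (σ : Fin p → ℝ) (z : Fin n → ℝ) : ℝ :=
  2 * lossV lp lm n z g + ∑ i, σ i * constraintGap F b i z

noncomputable def dualObjective (g : Fin n → ℝ) (σ : Fin p → ℝ) : ℝ :=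
  -(∑ i, b i * σ i) + (1 / (n : ℝ)) * ∑ j, maxLoss lp lm (g j) (∑ i, σ i * F i j)

lemma mem_ZSet_iff {z : Fin n → ℝ} :
    z ∈ ZSet p n F b ↔ z ∈ cube n ∧ ∀ i, 0 ≤ constraintGap F b i z := by
  simp only [ZSet, cube, constraintGap, mem_ofPred_eq, mem_univ_pi, sub_nonneg]

lemma concaveOn_lossV (g : Fin n → ℝ) :
    ConcaveOn ℝ (cube n) (fun z => 2 * lossV lp lm n z g) := by
  refine ⟨convex_pi fun _ _ => convex_Icc _ _, fun x _ y _ a c _ _ hac => le_of_eq ?_⟩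
  obtain rfl : c = 1 - a := by linarith
  simp only [lossV, smul_eq_mul, Pi.add_apply, Pi.smul_apply, Finset.mul_sum,
    ← Finset.sum_add_distrib]
  exact Finset.sum_congr rfl fun j _ => by ring

lemma concaveOn_constraintGap (i : Fin p) : ConcaveOn ℝ (cube n) (constraintGap F b i) := by
  refine ⟨convex_pi fun _ _ => convex_Icc _ _, fun x _ y _ a c _ _ hac => le_of_eq ?_⟩
  obtain rfl : c = 1 - a := by linarith
  have hsum : ∑ j, F i j * (a * x j + (1 - a) * y j)
      = a * ∑ j, F i j * x j + (1 - a) * ∑ j, F i j * y j := by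
    rw [Finset.mul_sum, Finset.mul_sum, ← Finset.sum_add_distrib]
    exact Finset.sum_congr rfl fun j _ => by ring
  simp only [constraintGap, smul_eq_mul, Pi.add_apply, Pi.smul_apply, hsum]
  ring

lemma lagrangian_eq (g : Fin n → ℝ) (σ : Fin p → ℝ) (z : Fin n → ℝ) :
    lagrangian lp lm F b g σ z = -(∑ i, b i * σ i) + (1 / (n : ℝ)) *
      ∑ j, ((1 + z j) * lp (g j) + (1 - z j) * lm (g j) + z j * ∑ i, σ i * F i j) := by
  have hswap : ∑ i, σ i * ∑ j, F i j * z j = ∑ j, z j * ∑ i, σ i * F i j := by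
    simp only [Finset.mul_sum]
    rw [Finset.sum_comm]
    exact Finset.sum_congr rfl fun j _ => Finset.sum_congr rfl fun i _ => by ring
  have hgap : ∑ i, σ i * constraintGap F b i z
      = (1 / (n : ℝ)) * ∑ j, z j * ∑ i, σ i * F i j - ∑ i, b i * σ i := by
    simp only [constraintGap, mul_sub, Finset.sum_sub_distrib, mul_left_comm _ (1 / (n : ℝ)),
      ← Finset.mul_sum, hswap, mul_comm (σ _) (b _)]
  have hsum : ∑ j, ((1 + z j) * lp (g j) + (1 - z j) * lm (g j) + z j * ∑ i, σ i * F i j)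
      = 2 * ∑ j, ((1 + z j) / 2 * lp (g j) + (1 - z j) / 2 * lm (g j))
        + ∑ j, z j * ∑ i, σ i * F i j := by
    rw [Finset.mul_sum, ← Finset.sum_add_distrib]
    exact Finset.sum_congr rfl fun j _ => by ring
  rw [lagrangian, hgap, lossV, hsum]
  ring

lemma lagrangian_le_dualObjective (g : Fin n → ℝ) (σ : Fin p → ℝ) {z : Fin n → ℝ}
    (hz : z ∈ cube n) : lagrangian lp lm F b g σ z ≤ dualObjective lp lm F b g σ := by
  rw [lagrangian_eq, dualObjective]
  gcongr with j
  exact le_maxLoss lp lm (hz j (mem_univ j))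

lemma exists_lagrangian_eq_dualObjective (g : Fin n → ℝ) (σ : Fin p → ℝ) :
    ∃ z ∈ cube n, lagrangian lp lm F b g σ z = dualObjective lp lm F b g σ := by
  choose z hz hzeq using fun j => exists_eq_maxLoss lp lm (g j) (∑ i, σ i * F i j)
  exact ⟨z, fun j _ => hz j, by simp only [lagrangian_eq, dualObjective, hzeq]⟩

lemma two_mul_lossV_le_dualObjective {g : Fin n → ℝ} {σ : Fin p → ℝ} (hσ : 0 ≤ σ)
    {z : Fin n → ℝ} (hz : z ∈ ZSet p n F b) :
    2 * lossV lp lm n z g ≤ dualObjective lp lm F b g σ := by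
  rw [mem_ZSet_iff] at hz
  calc 2 * lossV lp lm n z g ≤ lagrangian lp lm F b g σ z :=
        le_add_of_nonneg_right (Finset.sum_nonneg fun i _ => mul_nonneg (hσ i) (hz.2 i))
    _ ≤ dualObjective lp lm F b g σ := lagrangian_le_dualObjective lp lm F b g σ hz.1

lemma exists_dualObjective_le (g : Fin n → ℝ) (hZ : (ZSet p n F b).Nonempty) {P ε : ℝ}
    (hP : ∀ z ∈ ZSet p n F b, 2 * lossV lp lm n z g ≤ P) (hε : 0 < ε) :
    ∃ σ, 0 ≤ σ ∧ dualObjective lp lm F b g σ ≤ P + ε := by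
  obtain ⟨σ, hσ, hL⟩ := exists_lagrangeMultipliers (isCompact_univ_pi fun _ => isCompact_Icc)
    (concaveOn_lossV lp lm g) (concaveOn_constraintGap F b)
    (by unfold lossV; fun_prop : Continuous _).continuousOn
    (fun i => (by unfold constraintGap; fun_prop : Continuous _).continuousOn)
    (hZ.imp fun z hz => (mem_ZSet_iff F b).1 hz)
    (fun z hz hgap => hP z ((mem_ZSet_iff F b).2 ⟨hz, hgap⟩)) hε
  obtain ⟨z, hz, hzeq⟩ := exists_lagrangian_eq_dualObjective lp lm F b g σ
  exact ⟨σ, hσ, hzeq ▸ hL z hz⟩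

lemma bddAbove_lossV (g : Fin n → ℝ) :
    BddAbove {w | ∃ z ∈ ZSet p n F b, w = lossV lp lm n z g} := by
  refine ⟨dualObjective lp lm F b g 0 / 2, ?_⟩
  rintro _ ⟨z, hz, rfl⟩
  linarith [two_mul_lossV_le_dualObjective lp lm F b le_rfl hz (g := g)]

lemma isGLB_dualObjective (g : Fin n → ℝ) (hZ : (ZSet p n F b).Nonempty) :
    IsGLB (dualObjective lp lm F b g '' Ici 0)
      (2 * sSup {w | ∃ z ∈ ZSet p n F b, w = lossV lp lm n z g}) := by
  set W := {w | ∃ z ∈ ZSet p n F b, w = lossV lp lm n z g}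
  have hW : IsLUB W (sSup W) :=
    isLUB_csSup (hZ.elim fun z hz => ⟨_, z, hz, rfl⟩) (bddAbove_lossV lp lm F b g)
  refine ⟨?_, fun y hy => le_of_forall_pos_le_add fun ε hε => ?_⟩
  · rintro _ ⟨σ, hσ, rfl⟩
    have : sSup W ≤ dualObjective lp lm F b g σ / 2 := hW.2 <| by
      rintro _ ⟨z, hz, rfl⟩
      linarith [two_mul_lossV_le_dualObjective lp lm F b hσ hz (g := g)]
    linarith
  · obtain ⟨σ, hσ, hσle⟩ := exists_dualObjective_le lp lm F b g hZ (P := 2 * sSup W)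
      (fun z hz => by linarith [hW.1 ⟨z, hz, rfl⟩]) hε
    exact (hy ⟨σ, hσ, rfl⟩).trans hσle

lemma isLeast_dualObjective {Γinv : ℝ → ℝ} (hlpm : AntitoneOn lp (Icc (-1) 1))
    (hlmm : MonotoneOn lm (Icc (-1) 1))
    (hGinvMem : ∀ m ∈ Icc (lm (-1) - lp (-1)) (lm 1 - lp 1), Γinv m ∈ Icc (-1 : ℝ) 1)
    (hGinvRight : ∀ m ∈ Icc (lm (-1) - lp (-1)) (lm 1 - lp 1), lm (Γinv m) - lp (Γinv m) = m)
    (σ : Fin p → ℝ) :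
    IsLeast ((dualObjective lp lm F b · σ) '' cube n) (slack lp lm Γinv p n F b σ) := by
  refine ⟨?_, ?_⟩
  · choose g hg hgeq using fun j =>
      (isLeast_Psi hlpm hlmm hGinvMem hGinvRight (∑ i, σ i * F i j)).1
    exact ⟨g, fun j _ => hg j, by simp only [dualObjective, slack, hgeq]⟩
  · rintro _ ⟨g, hg, rfl⟩
    dsimp only
    rw [slack, dualObjective]
    gcongr with j
    exact (isLeast_Psi hlpm hlmm hGinvMem hGinvRight _).2 ⟨g j, hg j (mem_univ j), rfl⟩

end Game

theorem stmt_7_general (p n : ℕ) (hn : 0 < n)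
    (F : Fin p → Fin n → ℝ) (b : Fin p → ℝ)
    (lp lm Γinv : ℝ → ℝ)
    (hlpm : AntitoneOn lp (Set.Icc (-1) 1))
    (hlmm : MonotoneOn lm (Set.Icc (-1) 1))
    (hGinvMem : ∀ m ∈ Set.Icc (lm (-1) - lp (-1)) (lm 1 - lp 1), Γinv m ∈ Set.Icc (-1:ℝ) 1)
    (hGinvRight : ∀ m ∈ Set.Icc (lm (-1) - lp (-1)) (lm 1 - lp 1), lm (Γinv m) - lp (Γinv m) = m)
    (hZ : (ZSet p n F b).Nonempty) :
    sInf {v : ℝ | ∃ g : Fin n → ℝ, (∀ j, g j ∈ Set.Icc (-1:ℝ) 1) ∧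
        v = sSup {w : ℝ | ∃ z ∈ ZSet p n F b, w = lossV lp lm n z g}} =
      (1 / 2) * sInf {v : ℝ | ∃ σ : Fin p → ℝ, (∀ i, 0 ≤ σ i) ∧
        v = slack lp lm Γinv p n F b σ} := by
  set W := fun g => sSup {w | ∃ z ∈ ZSet p n F b, w = lossV lp lm n z g}
  have hA : {v | ∃ g : Fin n → ℝ, (∀ j, g j ∈ Icc (-1:ℝ) 1) ∧ v = W g} = W '' cube n := by
    ext v
    simp only [cube, mem_image, mem_univ_pi, mem_ofPred_eq, eq_comm]
  have hB : {v | ∃ σ : Fin p → ℝ, (∀ i, 0 ≤ σ i) ∧ v = slack lp lm Γinv p n F b σ}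
      = slack lp lm Γinv p n F b '' Ici 0 := by
    ext v
    simp only [mem_image, mem_Ici, mem_ofPred_eq, eq_comm, Pi.le_def, Pi.zero_apply]
  have hbdd : BddBelow (W '' cube n) := by
    refine ⟨min (lp 1) (lm (-1)), ?_⟩
    rintro _ ⟨g, hg, rfl⟩
    obtain ⟨z, hz⟩ := hZ
    exact (min_le_lossV hlpm hlmm hn ((mem_ZSet_iff F b).1 hz).1 hg).trans
      (le_csSup (bddAbove_lossV lp lm F b g) ⟨z, hz, rfl⟩)
  have hglb : IsGLB ((fun g => 2 * W g) '' cube n) (2 * sInf (W '' cube n)) := by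
    simpa only [image_image] using
      (isGLB_csInf (Nonempty.image W ⟨0, fun _ _ => by norm_num⟩) hbdd).mul_left zero_le_two
  have hslack := hglb.image_swap (fun g _ => isGLB_dualObjective lp lm F b g hZ)
    (fun σ _ => (isLeast_dualObjective lp lm F b hlpm hlmm hGinvMem hGinvRight σ).isGLB)
  rw [hA, hB, hslack.csInf_eq (nonempty_Ici.image _)]
  ring

theorem stmt_7 (p n : ℕ) (hp : 0 < p) (hn : 0 < n)
    (F : Fin p → Fin n → ℝ) (hF : ∀ i j, F i j ∈ Set.Icc (-1:ℝ) 1) (b : Fin p → ℝ)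
    (lp lm lp' lm' lp'' lm'' Γinv : ℝ → ℝ)
    (hlpc : ContinuousOn lp (Set.Icc (-1) 1))
    (hlmc : ContinuousOn lm (Set.Icc (-1) 1))
    (hlpd : ∀ x ∈ Set.Ioo (-1:ℝ) 1, HasDerivAt lp (lp' x) x)
    (hlmd : ∀ x ∈ Set.Ioo (-1:ℝ) 1, HasDerivAt lm (lm' x) x)
    (hlpd2 : ∀ x ∈ Set.Ioo (-1:ℝ) 1, HasDerivAt lp' (lp'' x) x)
    (hlmd2 : ∀ x ∈ Set.Ioo (-1:ℝ) 1, HasDerivAt lm' (lm'' x) x)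
    (hlpm : AntitoneOn lp (Set.Icc (-1) 1))
    (hlmm : MonotoneOn lm (Set.Icc (-1) 1))
    (hslope : ∀ x ∈ Set.Ioo (-1:ℝ) 1, 0 < lm' x - lp' x)
    (hGinvMem : ∀ m ∈ Set.Icc (lm (-1) - lp (-1)) (lm 1 - lp 1), Γinv m ∈ Set.Icc (-1:ℝ) 1)
    (hGinvRight : ∀ m ∈ Set.Icc (lm (-1) - lp (-1)) (lm 1 - lp 1), lm (Γinv m) - lp (Γinv m) = m)
    (hGinvLeft : ∀ g ∈ Set.Icc (-1:ℝ) 1, Γinv (lm g - lp g) = g)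
    (hZ : (ZSet p n F b).Nonempty) :
    sInf {v : ℝ | ∃ g : Fin n → ℝ, (∀ j, g j ∈ Set.Icc (-1:ℝ) 1) ∧
        v = sSup {w : ℝ | ∃ z ∈ ZSet p n F b, w = lossV lp lm n z g}} =
      (1 / 2) * sInf {v : ℝ | ∃ σ : Fin p → ℝ, (∀ i, 0 ≤ σ i) ∧
        v = slack lp lm Γinv p n F b σ} :=
  stmt_7_general p n hn F b lp lm Γinv hlpm hlmm hGinvMem hGinvRight hZ
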